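/- arXiv:2001.00714 — 6 statements merged into one kernel-verified Lean document; each statement's English description precedes it below -/
import Mathlib

section
/- Let N be a finite ground set with |N| = n, let f : Finset N → ℝ be a nonnegative, monotone increasing, submodular set function with f(∅) = 0, and let 1 ≤ k ≤ n. The lazier-than-lazy greedy algorithm with sample size s = 1 (i.e., at each of the k rounds a single element is sampled uniformly at random from the remaining elements and added to the current set) achieves E[f(S_k)] ≥ (1 − 1/e − e^{−k/n}) · max{ f(S) : S ⊆ N, |S| ≤ k }. -/
/-!
Conditioned on the current set `T`, the sampled element is uniform over the at most `n`
remaining ones, so by submodularity and monotonicity its expected marginal gain is at least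
`(OPT - f T) / n`. Hence `E[f(S_{i+1})] ≥ (1 - 1/n) E[f(S_i)] + OPT / n`, which unrolls to
`E[f(S_k)] ≥ (1 - (1 - 1/n)^k) OPT ≥ (1 - e^{-k/n}) OPT`.
-/

open Finset

namespace PMF

variable {α β : Type*} [Fintype α]

noncomputable def expectation (p : PMF α) (g : α → ℝ) : ℝ :=
  ∑ a, (p a).toReal * g a

theorem sum_toReal_eq_one (p : PMF α) : ∑ a, (p a).toReal = 1 := by
  rw [← ENNReal.toReal_sum fun a _ => p.apply_ne_top a, ← tsum_fintype (L := .unconditional _),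
    p.tsum_coe, ENNReal.toReal_one]

theorem expectation_pure [DecidableEq α] (x : α) (g : α → ℝ) :
    expectation (pure x) g = g x := by
  simp [expectation, pure_apply, apply_ite ENNReal.toReal, ite_mul]

theorem expectation_uniformOfFinset (s : Finset α) (hs : s.Nonempty) (g : α → ℝ) :
    expectation (uniformOfFinset s hs) g = (#s : ℝ)⁻¹ * ∑ a ∈ s, g a := by
  rw [mul_sum, expectation, ← sum_subset (subset_univ s)]
  · refine sum_congr rfl fun a ha => ?_
    simp [uniformOfFinset_apply_of_mem hs ha]
  · intro a _ ha
    simp [uniformOfFinset_apply_of_notMem hs ha]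

theorem expectation_mono (p : PMF α) {g h : α → ℝ} (hgh : ∀ a, g a ≤ h a) :
    expectation p g ≤ expectation p h :=
  sum_le_sum fun a _ => mul_le_mul_of_nonneg_left (hgh a) ENNReal.toReal_nonneg

theorem expectation_affine (p : PMF α) (g : α → ℝ) (c d : ℝ) :
    expectation p (fun a => c * g a + d) = c * expectation p g + d := by
  simp only [expectation, mul_add, sum_add_distrib, mul_sum, ← sum_mul, sum_toReal_eq_one]
  simp only [mul_left_comm, one_mul]

variable [Fintype β]

theorem expectation_bind (p : PMF α) (q : α → PMF β) (g : β → ℝ) :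
    expectation (p.bind q) g = expectation p fun a => expectation (q a) g := by
  have hbind : ∀ b, ((p.bind q) b).toReal = ∑ a, (p a).toReal * (q a b).toReal := fun b => by
    rw [bind_apply, tsum_fintype, ENNReal.toReal_sum fun a _ =>
      ENNReal.mul_ne_top (p.apply_ne_top a) ((q a).apply_ne_top b)]
    simp only [ENNReal.toReal_mul]
  simp only [expectation, hbind, sum_mul, mul_sum, mul_assoc]
  exact sum_comm

theorem le_expectation_bind (p : PMF α) (q : α → PMF β) {g : α → ℝ} {h : β → ℝ} {c d : ℝ}
    (hq : ∀ a, c * g a + d ≤ expectation (q a) h) :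
    c * expectation p g + d ≤ expectation (p.bind q) h := by
  rw [expectation_bind, ← expectation_affine]
  exact expectation_mono p hq

end PMF

theorem one_sub_pow_mul_le_of_le_succ {u : ℕ → ℝ} {q c : ℝ} (hq : q ≤ 1) (h0 : 0 ≤ u 0)
    (hsucc : ∀ i, (1 - q) * u i + q * c ≤ u (i + 1)) (k : ℕ) :
    (1 - (1 - q) ^ k) * c ≤ u k := by
  induction k with
  | zero => simpa using h0
  | succ k ih =>
    calc (1 - (1 - q) ^ (k + 1)) * c = (1 - q) * ((1 - (1 - q) ^ k) * c) + q * c := by ring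
      _ ≤ (1 - q) * u k + q * c := by gcongr
      _ ≤ u (k + 1) := hsucc k

theorem one_sub_inv_pow_le_exp_neg_div (n k : ℕ) :
    (1 - (n : ℝ)⁻¹) ^ k ≤ Real.exp (-(k / n)) := by
  calc (1 - (n : ℝ)⁻¹) ^ k ≤ Real.exp (-(n : ℝ)⁻¹) ^ k := by
        gcongr
        · linarith [Nat.cast_inv_le_one (α := ℝ) n]
        · linarith [Real.add_one_le_exp (-(n : ℝ)⁻¹)]
    _ = Real.exp (-(k / n)) := by rw [← Real.exp_nat_mul]; ring_nf

section Submodular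

variable {N : Type*} [DecidableEq N] {f : Finset N → ℝ}

theorem union_sub_le_sum_marginal
    (hsubmod : ∀ S T : Finset N, S ⊆ T → ∀ x ∉ T, f (insert x T) - f T ≤ f (insert x S) - f S)
    (T : Finset N) {A : Finset N} (hA : Disjoint A T) :
    f (T ∪ A) - f T ≤ ∑ x ∈ A, (f (insert x T) - f T) := by
  induction A using Finset.induction_on with
  | empty => simp
  | @insert a A haA ih =>
    rw [disjoint_insert_left] at hA
    have hgain := hsubmod T (T ∪ A) subset_union_left a (by simp [hA.1, haA])
    rw [union_insert, sum_insert haA]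
    linarith [ih hA.2]

theorem sub_le_sum_marginal_compl [Fintype N] (hmono : ∀ S T : Finset N, S ⊆ T → f S ≤ f T)
    (hsubmod : ∀ S T : Finset N, S ⊆ T → ∀ x ∉ T, f (insert x T) - f T ≤ f (insert x S) - f S)
    (S T : Finset N) :
    f S - f T ≤ ∑ x ∈ univ \ T, (f (insert x T) - f T) :=
  calc f S - f T ≤ f (T ∪ S \ T) - f T := by
        gcongr; exact hmono _ _ (by simp [union_sdiff_self_eq_union])
    _ ≤ ∑ x ∈ S \ T, (f (insert x T) - f T) :=
        union_sub_le_sum_marginal hsubmod T sdiff_disjoint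
    _ ≤ ∑ x ∈ univ \ T, (f (insert x T) - f T) :=
        sum_le_sum_of_subset_of_nonneg (sdiff_subset_sdiff (subset_univ S) le_rfl)
          fun x _ _ => sub_nonneg.mpr (hmono _ _ (subset_insert x T))

end Submodular

section Sampling

variable {N : Type*} [Fintype N] [DecidableEq N]

/-- `R` is a uniform random subset of `univ \ T` of size one (empty once `T = univ`), and its
element is inserted into `T`. -/
noncomputable def sampleStep (T : Finset N) : PMF (Finset N) :=
  (PMF.uniformOfFinset (powersetCard (min 1 (univ \ T).card) (univ \ T))
      (powersetCard_nonempty.mpr (min_le_right _ _))).bind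
    fun R => PMF.pure (if h : R.Nonempty then insert h.choose T else T)

theorem expectation_sampleStep_univ (g : Finset N → ℝ) :
    (sampleStep univ).expectation g = g univ := by
  simp [sampleStep, PMF.expectation_pure]

theorem expectation_sampleStep_of_nonempty {T : Finset N} (hT : (univ \ T).Nonempty)
    (g : Finset N → ℝ) :
    (sampleStep T).expectation g = (#(univ \ T) : ℝ)⁻¹ * ∑ x ∈ univ \ T, g (insert x T) := by
  rw [sampleStep, PMF.expectation_bind, PMF.expectation_uniformOfFinset,
    min_eq_left (one_le_card.mpr hT), powersetCard_one, card_map, sum_map]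
  congr 1
  refine sum_congr rfl fun x _ => ?_
  have hx : ({x} : Finset N).Nonempty := singleton_nonempty x
  simp [PMF.expectation_pure, mem_singleton.mp hx.choose_spec]

theorem le_expectation_sampleStep {f : Finset N → ℝ}
    (hmono : ∀ S T : Finset N, S ⊆ T → f S ≤ f T)
    (hsubmod : ∀ S T : Finset N, S ⊆ T → ∀ x ∉ T, f (insert x T) - f T ≤ f (insert x S) - f S)
    (S T : Finset N) :
    (1 - (Fintype.card N : ℝ)⁻¹) * f T + (Fintype.card N : ℝ)⁻¹ * f S ≤
      (sampleStep T).expectation f := by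
  have hq : 0 ≤ (Fintype.card N : ℝ)⁻¹ := by positivity
  rcases (univ \ T).eq_empty_or_nonempty with hT | hT
  · obtain rfl : T = univ := univ_subset_iff.mp (sdiff_eq_empty_iff_subset.mp hT)
    rw [expectation_sampleStep_univ]
    linarith [mul_le_mul_of_nonneg_left (hmono S univ (subset_univ S)) hq]
  · let gain := ∑ x ∈ univ \ T, (f (insert x T) - f T)
    have hgain : f S - f T ≤ gain := sub_le_sum_marginal_compl hmono hsubmod S T
    have hgain_nonneg : 0 ≤ gain :=
      sum_nonneg fun x _ => sub_nonneg.mpr (hmono _ _ (subset_insert x T))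
    have hcard : (Fintype.card N : ℝ)⁻¹ ≤ (#(univ \ T) : ℝ)⁻¹ := by
      gcongr
      exact_mod_cast card_le_univ _
    have hmean : (sampleStep T).expectation f = f T + (#(univ \ T) : ℝ)⁻¹ * gain := by
      rw [expectation_sampleStep_of_nonempty hT]
      simp only [gain, sum_sub_distrib, sum_const, nsmul_eq_mul]
      field_simp [hT.card_pos.ne']
      ring
    calc (1 - (Fintype.card N : ℝ)⁻¹) * f T + (Fintype.card N : ℝ)⁻¹ * f S
        = f T + (Fintype.card N : ℝ)⁻¹ * (f S - f T) := by ring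
      _ ≤ f T + (Fintype.card N : ℝ)⁻¹ * gain := by gcongr
      _ ≤ f T + (#(univ \ T) : ℝ)⁻¹ * gain := by gcongr
      _ = (sampleStep T).expectation f := hmean.symm

end Sampling

/-- Lazier-than-lazy greedy with sample size `s = 1` (pure random sampling):
for a nonnegative, normalized, monotone increasing, submodular `f` on a ground set of
size `n` and cardinality budget `1 ≤ k ≤ n`, the process that at each of the `k`
rounds samples a single element uniformly at random from the remaining elements and
adds it to the current set satisfies
`E[f(S_k)] ≥ (1 − 1/e − e^{−k/n}) · max_{|S| ≤ k} f(S)`. -/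
theorem lazier_greedy_sample_one_expected_guarantee
    {N : Type*} [Fintype N] [DecidableEq N]
    (f : Finset N → ℝ)
    (hmono : ∀ S T : Finset N, S ⊆ T → f S ≤ f T)
    (hsubmod : ∀ S T : Finset N, S ⊆ T → ∀ x ∉ T,
      f (insert x T) - f T ≤ f (insert x S) - f S)
    (hnorm : f ∅ = 0)
    (n k : ℕ) (hn : n = Fintype.card N)
    -- the random process: `proc i` is the law of `Sᵢ`; at each round a single
    -- element is sampled uniformly from the remaining elements and added
    (proc : ℕ → PMF (Finset N))
    (hproc0 : proc 0 = PMF.pure ∅)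
    (hprocSucc : ∀ i, proc (i + 1) = (proc i).bind (fun T =>
      (PMF.uniformOfFinset
          (Finset.powersetCard (min 1 (Finset.univ \ T).card) (Finset.univ \ T))
          (Finset.powersetCard_nonempty.mpr (min_le_right _ _))).bind
        (fun R => PMF.pure (if h : R.Nonempty then insert h.choose T else T)))) :
    (1 - 1 / Real.exp 1 - Real.exp (-((k : ℝ) / (n : ℝ)))) *
        ((Finset.univ.powerset.filter (fun T : Finset N => T.card ≤ k)).sup'
          ⟨∅, by simp⟩ f)
      ≤ ∑ T : Finset N, ((proc k) T).toReal * f T := by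
  subst hn
  set feasible := Finset.univ.powerset.filter (fun T : Finset N => T.card ≤ k)
  have hempty : ∅ ∈ feasible := by simp [feasible]
  obtain ⟨S, -, hS⟩ := exists_mem_eq_sup' ⟨∅, hempty⟩ f
  have hopt : 0 ≤ f S := hS ▸ hnorm ▸ le_sup' f hempty
  have hrounds : (1 - (1 - (Fintype.card N : ℝ)⁻¹) ^ k) * f S ≤ (proc k).expectation f :=
    one_sub_pow_mul_le_of_le_succ (Nat.cast_inv_le_one _)
      (by rw [hproc0, PMF.expectation_pure, hnorm])
      (fun i => hprocSucc i ▸ PMF.le_expectation_bind _ _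
        fun T => le_expectation_sampleStep hmono hsubmod S T) k
  rw [hS]
  refine le_trans ?_ hrounds
  gcongr ?_ * _
  have : 0 < 1 / Real.exp 1 := by positivity
  linarith [one_sub_inv_pow_le_exp_neg_div (Fintype.card N) k]
end

section
/- Let N be a finite ground set, let f : Finset N → ℝ be a monotone increasing, submodular set function with f(∅) = 0, and let 1 ≤ k ≤ |N|. Define the greedy sequence S₀ = ∅ and Sᵢ₊₁ = Sᵢ ∪ {xᵢ}, where xᵢ ∈ N \ Sᵢ maximizes f(Sᵢ ∪ {x}) − f(Sᵢ) over x ∈ N \ Sᵢ. Then f(S_k) ≥ (1 − 1/e) · max{ f(S) : S ⊆ N, |S| ≤ k }. -/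
/-- Classical greedy guarantee for maximizing a normalized, monotone increasing,
submodular set function under a cardinality constraint `k`:
the greedy solution satisfies `f(S_k) ≥ (1 − 1/e) · max_{|S| ≤ k} f(S)`. -/
theorem greedy_submodular_one_sub_inv_e
    {N : Type*} [Fintype N] [DecidableEq N]
    (f : Finset N → ℝ)
    (hmono : ∀ S T : Finset N, S ⊆ T → f S ≤ f T)
    (hsubmod : ∀ S T : Finset N, S ⊆ T → ∀ x ∉ T,
      f (insert x T) - f T ≤ f (insert x S) - f S)
    (hnorm : f ∅ = 0)
    (k : ℕ) (hk1 : 1 ≤ k) (hkn : k ≤ Fintype.card N)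
    (S : ℕ → Finset N) (x : ℕ → N)
    (hS0 : S 0 = ∅)
    (hstep : ∀ i < k, x i ∉ S i ∧ S (i + 1) = insert (x i) (S i) ∧
      ∀ y, y ∉ S i → f (insert y (S i)) - f (S i) ≤ f (insert (x i) (S i)) - f (S i)) :
    (1 - 1 / Real.exp 1) *
        ((Finset.univ.powerset.filter (fun T : Finset N => T.card ≤ k)).sup'
          ⟨∅, by simp⟩ f)
      ≤ f (S k) := by
  classical
  set F := (Finset.univ.powerset.filter (fun T : Finset N => T.card ≤ k)) with hF
  have hFne : F.Nonempty := ⟨∅, by rw [hF]; simp⟩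
  show (1 - 1 / Real.exp 1) * F.sup' hFne f ≤ f (S k)
  set OPT : ℝ := F.sup' hFne f with hOPT
  have hkpos : (0:ℝ) < k := by
    have : 0 < k := lt_of_lt_of_le one_pos hk1
    exact_mod_cast this
  have hfac : 0 ≤ 1 - 1/(k:ℝ) := by
    have : 1/(k:ℝ) ≤ 1 := by
      rw [div_le_one hkpos]; exact_mod_cast hk1
    linarith
  obtain ⟨T, hTmem, hTopt⟩ := Finset.exists_mem_eq_sup' hFne f
  have hTk : T.card ≤ k := (Finset.mem_filter.mp hTmem).2
  have hOPT0 : 0 ≤ OPT := by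
    have h := Finset.le_sup' f (show (∅:Finset N) ∈ F by simp [hF])
    rw [hnorm] at h
    exact h
  -- key telescoping bound
  have key : ∀ (m : ℝ) (A : Finset N), 0 ≤ m →
      (∀ y ∉ A, f (insert y A) - f A ≤ m) →
      ∀ T : Finset N, f (A ∪ T) ≤ f A + T.card * m := by
    intro m A hm hbound T
    induction T using Finset.induction_on with
    | empty => simp
    | @insert a T ha ih =>
      rw [Finset.union_insert]
      by_cases haA : a ∈ A ∪ T
      · rw [Finset.insert_eq_self.mpr haA]
        have hc : (T.card : ℝ) ≤ ((insert a T).card : ℝ) := by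
          exact_mod_cast Finset.card_le_card (Finset.subset_insert _ _)
        nlinarith
      · have haA' : a ∉ A := fun h => haA (Finset.mem_union_left _ h)
        have h1 := hsubmod A (A ∪ T) Finset.subset_union_left a haA
        have h2 := hbound a haA'
        have hcard : ((insert a T).card : ℝ) = (T.card : ℝ) + 1 := by
          exact_mod_cast Finset.card_insert_of_notMem ha
        rw [hcard]
        nlinarith
  -- per-step gain
  have step : ∀ i < k, OPT - f (S i) ≤ (k:ℝ) * (f (S (i+1)) - f (S i)) := by
    intro i hi
    obtain ⟨hxnot, hSsucc, hmax⟩ := hstep i hi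
    set m := f (insert (x i) (S i)) - f (S i) with hm'
    have hm : 0 ≤ m := by
      have := hmono (S i) (insert (x i) (S i)) (Finset.subset_insert _ _)
      linarith
    have h1 : f (S i ∪ T) ≤ f (S i) + T.card * m := key m (S i) hm hmax T
    have h2 : f T ≤ f (S i ∪ T) := hmono T _ Finset.subset_union_right
    have h3 : (T.card : ℝ) * m ≤ (k:ℝ) * m := by
      have : (T.card:ℝ) ≤ (k:ℝ) := by exact_mod_cast hTk
      nlinarith
    have hOT : OPT = f T := hTopt
    rw [hSsucc]
    rw [hOT, ← hm']
    have : f (S (i+1)) - f (S i) = m := by rw [hSsucc]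
    linarith
  -- induction on i
  have main : ∀ i ≤ k, OPT - f (S i) ≤ (1 - 1/(k:ℝ))^i * OPT := by
    intro i
    induction i with
    | zero => intro _; simp [hS0, hnorm]
    | succ i ih =>
      intro hik
      have hi : i < k := Nat.lt_of_succ_le hik
      have ih' := ih (le_of_lt hi)
      have hstep' := step i hi
      have h1 : OPT - f (S (i+1)) ≤ (1 - 1/(k:ℝ)) * (OPT - f (S i)) := by
        have expand : (1 - 1/(k:ℝ)) * (OPT - f (S i))
            = (OPT - f (S i)) - (OPT - f (S i))/(k:ℝ) := by ring
        rw [expand]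
        have hdiv : (OPT - f (S i)) / (k:ℝ) ≤ f (S (i+1)) - f (S i) := by
          rw [div_le_iff₀ hkpos]
          nlinarith
        linarith
      calc OPT - f (S (i+1)) ≤ (1 - 1/(k:ℝ)) * (OPT - f (S i)) := h1
        _ ≤ (1 - 1/(k:ℝ)) * ((1 - 1/(k:ℝ))^i * OPT) :=
            mul_le_mul_of_nonneg_left ih' hfac
        _ = (1 - 1/(k:ℝ))^(i+1) * OPT := by ring
  have hexp : (1 - 1/(k:ℝ))^k ≤ 1 / Real.exp 1 := by
    have h1 : 1 - 1/(k:ℝ) ≤ Real.exp (-(1/(k:ℝ))) := by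
      have := Real.add_one_le_exp (-(1/(k:ℝ)))
      linarith
    have h2 : (1 - 1/(k:ℝ))^k ≤ (Real.exp (-(1/(k:ℝ))))^k :=
      pow_le_pow_left₀ hfac h1 k
    have h3 : (Real.exp (-(1/(k:ℝ))))^k = Real.exp ((k:ℝ) * (-(1/(k:ℝ)))) := by
      rw [← Real.exp_nat_mul]
    have h4 : (k:ℝ) * (-(1/(k:ℝ))) = -1 := by
      field_simp
    rw [h3, h4, Real.exp_neg] at h2
    simpa [one_div] using h2
  have hmk := main k le_rfl
  have hfin : (1 - 1/(k:ℝ))^k * OPT ≤ (1/Real.exp 1) * OPT :=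
    mul_le_mul_of_nonneg_right hexp hOPT0
  linarith
end

section
/- Let N be a finite ground set, let f : Finset N → ℝ be a monotone increasing, submodular set function with f(∅) = 0, and let 1 ≤ k ≤ |N|. Define the greedy sequence S₀ = ∅ and Sᵢ₊₁ = Sᵢ ∪ {xᵢ}, where xᵢ ∈ N \ Sᵢ maximizes f(Sᵢ ∪ {x}) − f(Sᵢ) over x ∈ N \ Sᵢ. Then f(S_k) ≥ (1 − (1 − 1/k)^k) · max{ f(S) : S ⊆ N, |S| ≤ k }. -/
lemma greedy_marg_telescope {N : Type*} [DecidableEq N] (f : Finset N → ℝ)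
    (hsubmod : ∀ S T : Finset N, S ⊆ T → ∀ x ∉ T,
      f (insert x T) - f T ≤ f (insert x S) - f S) :
    ∀ (A B : Finset N), f (A ∪ B) - f B ≤ ∑ y ∈ A \ B, (f (insert y B) - f B) := by
  intro A
  induction A using Finset.induction_on with
  | empty => intro B; simp
  | @insert a A ha ih =>
    intro B
    by_cases haB : a ∈ B
    · have h1 : insert a A ∪ B = A ∪ B := by
        rw [Finset.insert_union, Finset.insert_eq_self.2 (Finset.mem_union_right _ haB)]
      have h2 : insert a A \ B = A \ B := by
        ext y; simp only [Finset.mem_sdiff, Finset.mem_insert]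
        constructor
        · rintro ⟨h | h, hy⟩
          · exact absurd (h ▸ haB) hy
          · exact ⟨h, hy⟩
        · rintro ⟨h, hy⟩; exact ⟨Or.inr h, hy⟩
      rw [h1, h2]; exact ih B
    · have haAB : a ∉ A ∪ B := by simp [ha, haB]
      have h1 : f (insert a (A ∪ B)) - f (A ∪ B) ≤ f (insert a B) - f B :=
        hsubmod B (A ∪ B) Finset.subset_union_right a haAB
      have h2 : insert a A \ B = insert a (A \ B) := by
        ext y; simp only [Finset.mem_sdiff, Finset.mem_insert]
        constructor
        · rintro ⟨h | h, hy⟩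
          · exact Or.inl h
          · exact Or.inr ⟨h, hy⟩
        · rintro (rfl | ⟨h, hy⟩)
          · exact ⟨Or.inl rfl, haB⟩
          · exact ⟨Or.inr h, hy⟩
      have h3 : a ∉ A \ B := fun h => ha (Finset.mem_sdiff.1 h).1
      rw [Finset.insert_union, h2, Finset.sum_insert h3]
      have := ih B
      linarith

/-- Classical greedy guarantee for maximizing a normalized, monotone increasing,
submodular set function under a cardinality constraint `k`:
the greedy solution satisfies `f(S_k) ≥ (1 − (1 − 1/k)^k) · max_{|S| ≤ k} f(S)`. -/
theorem greedy_submodular_one_sub_pow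
    {N : Type*} [Fintype N] [DecidableEq N]
    (f : Finset N → ℝ)
    (hmono : ∀ S T : Finset N, S ⊆ T → f S ≤ f T)
    (hsubmod : ∀ S T : Finset N, S ⊆ T → ∀ x ∉ T,
      f (insert x T) - f T ≤ f (insert x S) - f S)
    (hnorm : f ∅ = 0)
    (k : ℕ) (hk1 : 1 ≤ k) (hkn : k ≤ Fintype.card N)
    (S : ℕ → Finset N) (x : ℕ → N)
    (hS0 : S 0 = ∅)
    (hstep : ∀ i < k, x i ∉ S i ∧ S (i + 1) = insert (x i) (S i) ∧
      ∀ y, y ∉ S i → f (insert y (S i)) - f (S i) ≤ f (insert (x i) (S i)) - f (S i)) :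
    (1 - (1 - 1 / (k : ℝ)) ^ k) *
        ((Finset.univ.powerset.filter (fun T : Finset N => T.card ≤ k)).sup'
          ⟨∅, by simp⟩ f)
      ≤ f (S k) := by
  classical
  set OPT : ℝ := (Finset.univ.powerset.filter (fun T : Finset N => T.card ≤ k)).sup'
      ⟨∅, by simp⟩ f with hOPT
  obtain ⟨T, hTmem, hTeq⟩ := Finset.exists_mem_eq_sup'
      (⟨∅, by simp⟩ : (Finset.univ.powerset.filter (fun T : Finset N => T.card ≤ k)).Nonempty) f
  have hTcard : T.card ≤ k := (Finset.mem_filter.1 hTmem).2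
  have hkpos : (0:ℝ) < k := by exact_mod_cast hk1
  have hfrac : (0:ℝ) ≤ 1 - 1 / k := by
    have : (1:ℝ) / k ≤ 1 := by
      rw [div_le_one hkpos]; exact_mod_cast hk1
    linarith
  -- per-step inequality
  have hstep' : ∀ i < k, OPT - f (S (i+1)) ≤ (1 - 1/(k:ℝ)) * (OPT - f (S i)) := by
    intro i hi
    obtain ⟨hx, hSi1, hmax⟩ := hstep i hi
    have hg0 : 0 ≤ f (S (i+1)) - f (S i) := by
      have := hmono (S i) (insert (x i) (S i)) (Finset.subset_insert _ _)
      rw [hSi1]; linarith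
    have h1 : OPT ≤ f (T ∪ S i) := by
      rw [hOPT, hTeq]; exact hmono T (T ∪ S i) Finset.subset_union_left
    have h2 : f (T ∪ S i) - f (S i) ≤ ∑ y ∈ T \ S i, (f (insert y (S i)) - f (S i)) :=
      greedy_marg_telescope f hsubmod T (S i)
    have h3 : ∑ y ∈ T \ S i, (f (insert y (S i)) - f (S i)) ≤
        (T \ S i).card • (f (S (i+1)) - f (S i)) := by
      apply Finset.sum_le_card_nsmul
      intro y hy
      have := hmax y (Finset.mem_sdiff.1 hy).2
      rw [hSi1]; exact this
    have hcard : ((T \ S i).card : ℝ) ≤ k := by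
      exact_mod_cast le_trans (Finset.card_le_card (Finset.sdiff_subset)) hTcard
    have h4 : ((T \ S i).card : ℝ) * (f (S (i+1)) - f (S i)) ≤ k * (f (S (i+1)) - f (S i)) :=
      mul_le_mul_of_nonneg_right hcard hg0
    have h5 : OPT ≤ f (S i) + (k:ℝ) * (f (S (i+1)) - f (S i)) := by
      have hsm : ((T \ S i).card : ℝ) * (f (S (i+1)) - f (S i)) =
          (T \ S i).card • (f (S (i+1)) - f (S i)) := by rw [nsmul_eq_mul]
      rw [← hsm] at h3
      linarith
    have h6 : (OPT - f (S i)) / k ≤ f (S (i+1)) - f (S i) := by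
      rw [div_le_iff₀ hkpos]; nlinarith
    have : (1 - 1/(k:ℝ)) * (OPT - f (S i)) = (OPT - f (S i)) - (OPT - f (S i))/k := by
      field_simp
    rw [this]
    linarith
  -- induction
  have hind : ∀ i ≤ k, OPT - f (S i) ≤ (1 - 1/(k:ℝ))^i * OPT := by
    intro i
    induction i with
    | zero => intro _; simp [hS0, hnorm]
    | succ i ih =>
      intro hik
      have hi : i < k := hik
      have h1 := hstep' i hi
      have h2 := ih (le_of_lt hi)
      calc OPT - f (S (i+1)) ≤ (1 - 1/(k:ℝ)) * (OPT - f (S i)) := h1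
        _ ≤ (1 - 1/(k:ℝ)) * ((1 - 1/(k:ℝ))^i * OPT) := mul_le_mul_of_nonneg_left h2 hfrac
        _ = (1 - 1/(k:ℝ))^(i+1) * OPT := by ring
  have := hind k le_rfl
  linarith
end

section
/- Let N be a finite ground set and let f : Finset N → ℝ be a monotone increasing, submodular set function. Then for any sets S, O ⊆ N, f(S ∪ O) ≤ f(S) + Σ_{x ∈ O \ S} ( f(S ∪ {x}) − f(S) ). -/
/-! Add the elements of `O \ S` to `S` one at a time: by submodularity each step gains at most
the marginal value of that element with respect to `S` alone. -/

open Finset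

theorem union_le_add_sum_marginal_of_disjoint
    {N β : Type*} [DecidableEq N] [AddCommGroup β] [PartialOrder β] [IsOrderedAddMonoid β]
    (f : Finset N → β)
    (hsubmod : ∀ S T : Finset N, S ⊆ T → ∀ x ∉ T,
      f (insert x T) - f T ≤ f (insert x S) - f S)
    (S D : Finset N) (hD : Disjoint D S) :
    f (S ∪ D) ≤ f S + ∑ x ∈ D, (f (insert x S) - f S) := by
  induction D using Finset.induction_on with
  | empty => simp
  | insert a D haD ih =>
    obtain ⟨haS, hD⟩ := disjoint_insert_left.mp hD
    have hstep : f (insert a (S ∪ D)) - f (S ∪ D) ≤ f (insert a S) - f S :=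
      hsubmod S (S ∪ D) subset_union_left a (by simp [haS, haD])
    calc f (S ∪ insert a D)
        = (f (insert a (S ∪ D)) - f (S ∪ D)) + f (S ∪ D) := by
          rw [union_insert, sub_add_cancel]
      _ ≤ (f (insert a S) - f S) + (f S + ∑ x ∈ D, (f (insert x S) - f S)) :=
          add_le_add hstep (ih hD)
      _ = f S + ∑ x ∈ insert a D, (f (insert x S) - f S) := by
          rw [sum_insert haD]; abel

theorem submodular_union_marginal_bound_general
    {N : Type*} [DecidableEq N]
    (f : Finset N → ℝ)
    (hsubmod : ∀ S T : Finset N, S ⊆ T → ∀ x ∉ T,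
      f (insert x T) - f T ≤ f (insert x S) - f S)
    (S O : Finset N) :
    f (S ∪ O) ≤ f S + ∑ x ∈ O \ S, (f (insert x S) - f S) := by
  simpa only [union_sdiff_self_eq_union] using
    union_le_add_sum_marginal_of_disjoint f hsubmod S (O \ S) sdiff_disjoint

/-- For a monotone increasing, submodular set function `f` on a finite ground set,
`f(S ∪ O) ≤ f(S) + Σ_{x ∈ O \ S} ( f(S ∪ {x}) − f(S) )`. -/
theorem submodular_union_marginal_bound
    {N : Type*} [Fintype N] [DecidableEq N]
    (f : Finset N → ℝ)
    (hmono : ∀ S T : Finset N, S ⊆ T → f S ≤ f T)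
    (hsubmod : ∀ S T : Finset N, S ⊆ T → ∀ x ∉ T,
      f (insert x T) - f T ≤ f (insert x S) - f S)
    (S O : Finset N) :
    f (S ∪ O) ≤ f S + ∑ x ∈ O \ S, (f (insert x S) - f S) :=
  submodular_union_marginal_bound_general f hsubmod S O
end

section
/- Let N be a finite ground set and let f : Finset N → ℝ be a monotone increasing, submodular set function. Then for any set S ⊆ N and any nonempty set O ⊆ N with O \ S ≠ ∅ and |O| ≤ k (k ≥ 1), there exists an element x ∈ O \ S with f(S ∪ {x}) − f(S) ≥ ( f(O) − f(S) ) / k. -/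
lemma submod_sum_bound
    {N : Type*} [Fintype N] [DecidableEq N]
    (f : Finset N → ℝ)
    (hsubmod : ∀ S T : Finset N, S ⊆ T → ∀ x ∉ T,
      f (insert x T) - f T ≤ f (insert x S) - f S)
    (S : Finset N) :
    ∀ A : Finset N, Disjoint A S →
      f (S ∪ A) - f S ≤ ∑ x ∈ A, (f (insert x S) - f S) := by
  intro A
  induction A using Finset.induction_on with
  | empty => simp
  | @insert a A' ha ih =>
    intro hdisj
    have hdisj' : Disjoint A' S := (Finset.disjoint_insert_left.mp hdisj).2
    have haS : a ∉ S := (Finset.disjoint_insert_left.mp hdisj).1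
    have haSA : a ∉ S ∪ A' := by simp [haS, ha]
    have h1 : f (insert a (S ∪ A')) - f (S ∪ A') ≤ f (insert a S) - f S :=
      hsubmod S (S ∪ A') (Finset.subset_union_left) a haSA
    have : S ∪ insert a A' = insert a (S ∪ A') := by
      ext x; simp [or_left_comm]
    rw [this, Finset.sum_insert ha]
    have := ih hdisj'
    linarith

/-- For a monotone increasing, submodular set function `f` on a finite ground set,
for any `S ⊆ N` and nonempty `O ⊆ N` with `O \ S ≠ ∅` and `|O| ≤ k` (`k ≥ 1`),
there exists `x ∈ O \ S` with `f(S ∪ {x}) − f(S) ≥ (f(O) − f(S)) / k`. -/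
theorem submodular_exists_good_marginal
    {N : Type*} [Fintype N] [DecidableEq N]
    (f : Finset N → ℝ)
    (hmono : ∀ S T : Finset N, S ⊆ T → f S ≤ f T)
    (hsubmod : ∀ S T : Finset N, S ⊆ T → ∀ x ∉ T,
      f (insert x T) - f T ≤ f (insert x S) - f S)
    (S O : Finset N) (hO : O.Nonempty) (hOS : (O \ S).Nonempty)
    (k : ℕ) (hk : 1 ≤ k) (hcard : O.card ≤ k) :
    ∃ x ∈ O \ S, (f O - f S) / (k : ℝ) ≤ f (insert x S) - f S := by
  have hkpos : (0 : ℝ) < (k : ℝ) := by exact_mod_cast hk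
  by_cases hfo : f O ≤ f S
  · obtain ⟨x, hx⟩ := hOS
    refine ⟨x, hx, ?_⟩
    have h1 : f S ≤ f (insert x S) := hmono S _ (Finset.subset_insert x S)
    have h2 : (f O - f S) / (k : ℝ) ≤ 0 := by
      apply div_nonpos_of_nonpos_of_nonneg <;> linarith
    linarith
  · push_neg at hfo
    set A := O \ S with hA
    have hdisj : Disjoint A S := Finset.sdiff_disjoint
    have hsum : f (S ∪ A) - f S ≤ ∑ x ∈ A, (f (insert x S) - f S) :=
      submod_sum_bound f hsubmod S A hdisj
    have hOsub : O ⊆ S ∪ A := by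
      intro x hx
      by_cases hxS : x ∈ S <;> simp [hA, hx, hxS]
    have hfO : f O ≤ f (S ∪ A) := hmono _ _ hOsub
    have hcardA : A.card ≤ k := le_trans (Finset.card_le_card (Finset.sdiff_subset)) hcard
    have hconst : ∑ _x ∈ A, (f O - f S) / (k : ℝ) ≤ ∑ x ∈ A, (f (insert x S) - f S) := by
      rw [Finset.sum_const, nsmul_eq_mul]
      have h1 : (A.card : ℝ) * ((f O - f S) / (k : ℝ)) ≤ (k : ℝ) * ((f O - f S) / (k : ℝ)) := by
        apply mul_le_mul_of_nonneg_right
        · exact_mod_cast hcardA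
        · exact div_nonneg (by linarith) hkpos.le
      have h2 : (k : ℝ) * ((f O - f S) / (k : ℝ)) = f O - f S := by
        field_simp
      linarith
    obtain ⟨x, hx, hle⟩ := Finset.exists_le_of_sum_le hOS hconst
    exact ⟨x, hx, hle⟩
end

section
/- Let B be a d×d real symmetric positive definite matrix and let A₁, …, A_m be d×d real symmetric positive semidefinite matrices. Define the set function f on subsets of {1, …, m} by f(S) = log det( B + Σ_{i ∈ S} Aᵢ ). Then f is submodular: for all S ⊆ T ⊆ {1, …, m} and all j ∉ T, f(S ∪ {j}) − f(S) ≥ f(T ∪ {j}) − f(T). -/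
/-!
By the matrix determinant lemma, adding a rank-one term `v vᵀ` to a positive definite `P`
raises `log det` by `log (1 + vᵀ P⁻¹ v)`, and this decreases as `P` grows in the Loewner order
because matrix inversion is order-reversing. A positive semidefinite `Aⱼ` is a finite sum of
rank-one terms, so adding it to `B + Σ_{i ∈ T} Aᵢ` gains no more than adding it to the smaller
`B + Σ_{i ∈ S} Aᵢ`.
-/

open Matrix

namespace Matrix

variable {n : Type*} [Fintype n] [DecidableEq n]

theorem det_add_vecMulVec {R : Type*} [CommRing R] {P : Matrix n n R} (hP : IsUnit P.det)
    (u v : n → R) : (P + vecMulVec u v).det = P.det * (1 + v ⬝ᵥ P⁻¹ *ᵥ u) := by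
  rw [vecMulVec_eq Unit, det_add_replicateCol_mul_replicateRow hP,
    det_unique (1 + _ : Matrix Unit Unit R), Matrix.mul_assoc, ← replicateCol_mulVec]
  rfl

theorem PosDef.dotProduct_inv_mulVec_le {P P' : Matrix n n ℝ} (hP : P.PosDef)
    (hPP' : (P' - P).PosSemidef) (v : n → ℝ) :
    v ⬝ᵥ P'⁻¹ *ᵥ v ≤ v ⬝ᵥ P⁻¹ *ᵥ v := by
  have hP' : P'.PosDef := by simpa using hP.add_posSemidef hPP'
  set x := P'⁻¹ *ᵥ v
  set y := P⁻¹ *ᵥ v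
  have hx : P' *ᵥ x = v := by
    rw [mulVec_mulVec, mul_nonsing_inv _ hP'.det_pos.ne'.isUnit, one_mulVec]
  have hy : P *ᵥ y = v := by
    rw [mulVec_mulVec, mul_nonsing_inv _ hP.det_pos.ne'.isUnit, one_mulVec]
  have hyx : y ⬝ᵥ P *ᵥ x = x ⬝ᵥ v := by
    rw [dotProduct_mulVec, ← mulVec_transpose, (isHermitian_iff_isSymm.mp hP.isHermitian).eq, hy,
      dotProduct_comm]
  -- `0 ≤ (x - y) ⬝ᵥ P (x - y) ≤ x ⬝ᵥ P' x - 2 (v ⬝ᵥ x) + v ⬝ᵥ y = v ⬝ᵥ y - v ⬝ᵥ x`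
  have h₁ := hP.posSemidef.dotProduct_mulVec_nonneg (x - y)
  have h₂ := hPP'.dotProduct_mulVec_nonneg x
  simp only [star_trivial, sub_mulVec, mulVec_sub, dotProduct_sub, sub_dotProduct, hx, hy, hyx]
    at h₁ h₂
  linarith [dotProduct_comm x v, dotProduct_comm y v]

theorem PosDef.log_det_add_vecMulVec_sub_le {P P' : Matrix n n ℝ} (hP : P.PosDef)
    (hPP' : (P' - P).PosSemidef) (v : n → ℝ) :
    Real.log (P' + vecMulVec v v).det - Real.log P'.det ≤
      Real.log (P + vecMulVec v v).det - Real.log P.det := by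
  have hP' : P'.PosDef := by simpa using hP.add_posSemidef hPP'
  have hq := hP.inv.posSemidef.dotProduct_mulVec_nonneg v
  have hq' := hP'.inv.posSemidef.dotProduct_mulVec_nonneg v
  rw [star_trivial] at hq hq'
  rw [det_add_vecMulVec hP.det_pos.ne'.isUnit, det_add_vecMulVec hP'.det_pos.ne'.isUnit,
    Real.log_mul hP.det_pos.ne' (by linarith), Real.log_mul hP'.det_pos.ne' (by linarith),
    add_sub_cancel_left, add_sub_cancel_left]
  gcongr
  exact hP.dotProduct_inv_mulVec_le hPP' v

theorem PosDef.log_det_add_sum_vecMulVec_sub_le {ι : Type*} (s : Finset ι) (v : ι → n → ℝ)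
    {P P' : Matrix n n ℝ} (hP : P.PosDef) (hPP' : (P' - P).PosSemidef) :
    Real.log (P' + ∑ i ∈ s, vecMulVec (v i) (v i)).det - Real.log P'.det ≤
      Real.log (P + ∑ i ∈ s, vecMulVec (v i) (v i)).det - Real.log P.det := by
  induction s using Finset.cons_induction generalizing P P' with
  | empty => simp
  | cons a s ha ih =>
    have hstep := hP.log_det_add_vecMulVec_sub_le hPP' (v a)
    have hva : (vecMulVec (v a) (v a)).PosSemidef := by
      simpa using posSemidef_vecMulVec_self_star (v a)
    have hrest := ih (hP.add_posSemidef hva) (P' := P' + vecMulVec (v a) (v a))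
      (by simpa using hPP')
    simp only [Finset.sum_cons, ← add_assoc]
    linarith

theorem PosDef.log_det_add_sub_le {P P' A : Matrix n n ℝ} (hP : P.PosDef)
    (hPP' : (P' - P).PosSemidef) (hA : A.PosSemidef) :
    Real.log (P' + A).det - Real.log P'.det ≤ Real.log (P + A).det - Real.log P.det := by
  obtain ⟨m, v, rfl⟩ := posSemidef_iff_eq_sum_vecMulVec.mp hA
  simpa using hP.log_det_add_sum_vecMulVec_sub_le Finset.univ v hPP'

end Matrix

/-- The log-determinant set function `f(S) = log det(B + Σ_{i ∈ S} Aᵢ)` is submodular,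
for `B` symmetric positive definite and `A₁, …, A_m` symmetric positive semidefinite. -/
theorem logdet_submodular
    (d m : ℕ)
    (B : Matrix (Fin d) (Fin d) ℝ) (hB : B.PosDef)
    (A : Fin m → Matrix (Fin d) (Fin d) ℝ) (hA : ∀ i, (A i).PosSemidef)
    (S T : Finset (Fin m)) (hST : S ⊆ T) (j : Fin m) (hj : j ∉ T) :
    Real.log (B + ∑ i ∈ insert j T, A i).det - Real.log (B + ∑ i ∈ T, A i).det ≤
      Real.log (B + ∑ i ∈ insert j S, A i).det - Real.log (B + ∑ i ∈ S, A i).det := by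
  have hsum (s : Finset (Fin m)) : (∑ i ∈ s, A i).PosSemidef := posSemidef_sum s fun i _ ↦ hA i
  have hTS : (B + ∑ i ∈ T, A i) - (B + ∑ i ∈ S, A i) = ∑ i ∈ T \ S, A i := by
    rw [← Finset.sum_sdiff hST]
    abel
  have key :=
    (hB.add_posSemidef (hsum S)).log_det_add_sub_le (hTS ▸ hsum (T \ S)) (hA j)
  rw [Finset.sum_insert hj, Finset.sum_insert (fun h ↦ hj (hST h))]
  simpa only [add_comm (A j), add_assoc] using key
end
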